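/- arXiv:1911.10877 — 2 statements merged into one kernel-verified Lean document; each statement's English description precedes it below -/
import Mathlib

section
/- Let Q be a real symmetric n×n matrix whose associated quadratic form has signature (p, q, s) (p positive, q negative, s zero eigenvalues, counted with multiplicity). Then there exists a (possibly nonsymmetric) real matrix Q' with rank(Q') = max(p, q) such that xᵀQ'x = xᵀQx for all x ∈ ℝⁿ. -/
/-!
Congruence by `P` turns `Q` into `D = diag(1, …, 1, -1, …, -1, 0, …, 0)`; congruence preserves
rank, and adding a matrix of the form `B - Bᵀ` changes no quadratic form. With `r = max p q` and
`m = min p q`, pair the positive coordinate `j < m` with the negative coordinate `r + j`, so that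
`x_j² - x_{r+j}² = (x_j - x_{r+j})(x_j + x_{r+j})` is represented by a rank-one block. In matrix
form: if `N` is the partial shift `e_j ↦ e_{r+j}` (`j < m`) and `J` is diagonal with `p` entries `1`
followed by `r - p` entries `-1`, then `(1 + N) J (1 - Nᵀ) = D + (N - Nᵀ)`, and the outer factors
are unipotent, so the rank is `r`.
-/

open Matrix

section

variable {ι R : Type*} [Fintype ι] [CommRing R]

theorem Matrix.dotProduct_transpose_mulVec_self (A : Matrix ι ι R) (x : ι → R) :
    x ⬝ᵥ Aᵀ *ᵥ x = x ⬝ᵥ A *ᵥ x := by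
  rw [mulVec_transpose, dotProduct_comm, dotProduct_mulVec]

theorem Matrix.dotProduct_conj_add_sub_transpose_mulVec_self (C D B : Matrix ι ι R) (x : ι → R) :
    x ⬝ᵥ (Cᵀ * (D + (B - Bᵀ)) * C) *ᵥ x = x ⬝ᵥ (Cᵀ * D * C) *ᵥ x := by
  have hsplit : Cᵀ * (D + (B - Bᵀ)) * C = Cᵀ * D * C + (Cᵀ * B * C - (Cᵀ * B * C)ᵀ) := by
    simp only [transpose_mul, transpose_transpose, Matrix.mul_add, Matrix.add_mul,
      Matrix.mul_sub, Matrix.sub_mul, Matrix.mul_assoc]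
  rw [hsplit, add_mulVec, sub_mulVec, dotProduct_add, dotProduct_sub,
    dotProduct_transpose_mulVec_self, sub_self, add_zero]

theorem Matrix.rank_mul_mul_of_isUnit [DecidableEq ι] {A B : Matrix ι ι R} (hA : IsUnit A)
    (hB : IsUnit B) (M : Matrix ι ι R) : (A * M * B).rank = M.rank := by
  rw [rank_mul_eq_left_of_isUnit_det _ _ ((isUnit_iff_isUnit_det B).mp hB),
    rank_mul_eq_right_of_isUnit_det _ _ ((isUnit_iff_isUnit_det A).mp hA)]

end

namespace Matrix

variable {n : ℕ} {R : Type*} [CommRing R]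

def signDiagonal (a b : ℕ) : Matrix (Fin n) (Fin n) R :=
  diagonal fun i => if (i : ℕ) < a then 1 else if (i : ℕ) < b then -1 else 0

def partialShift (b k : ℕ) : Matrix (Fin n) (Fin n) R :=
  of fun i j => if (j : ℕ) < k ∧ (i : ℕ) = b + j then 1 else 0

variable {a b c k : ℕ}

theorem partialShift_mul_self (h : k ≤ b) :
    (partialShift b k : Matrix (Fin n) (Fin n) R) * partialShift b k = 0 := by
  ext i j
  simp only [mul_apply, partialShift, of_apply, Matrix.zero_apply]
  refine Finset.sum_eq_zero fun l _ => ?_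
  split_ifs <;> first | omega | simp

theorem partialShift_mul_signDiagonal (h : k ≤ a) :
    (partialShift b k : Matrix (Fin n) (Fin n) R) * signDiagonal a c = partialShift b k := by
  ext i j
  simp only [signDiagonal, mul_diagonal, partialShift, of_apply]
  split_ifs <;> first | omega | simp

theorem signDiagonal_mul_partialShift_transpose (h : k ≤ a) :
    signDiagonal a c * (partialShift b k : Matrix (Fin n) (Fin n) R)ᵀ = (partialShift b k)ᵀ := by
  ext i j
  simp only [signDiagonal, diagonal_mul, partialShift, transpose_apply, of_apply]
  split_ifs <;> first | omega | simp

theorem partialShift_mul_partialShift_transpose :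
    (partialShift b k : Matrix (Fin n) (Fin n) R) * (partialShift b k)ᵀ =
      diagonal fun i : Fin n => if b ≤ (i : ℕ) ∧ (i : ℕ) < b + k then 1 else 0 := by
  ext i j
  simp only [mul_apply, partialShift, transpose_apply, of_apply, diagonal_apply, ← ite_and,
    mul_ite, mul_one, mul_zero]
  by_cases h : i = j ∧ b ≤ (i : ℕ) ∧ (i : ℕ) < b + k
  · obtain ⟨rfl, hb, hbk⟩ := h
    rw [if_pos ⟨rfl, hb, hbk⟩, Finset.sum_eq_single ⟨i - b, by omega⟩]
    · exact if_pos (by simp only; omega)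
    · exact fun l _ hl => if_neg fun h => hl (Fin.ext (by simp only; omega))
    · simp
  · rw [if_neg (by tauto)]
    refine Finset.sum_eq_zero fun l _ => if_neg ?_
    omega

theorem signDiagonal_sub_diagonal_Ico (h : a ≤ b) :
    signDiagonal a b -
        diagonal (fun i : Fin n => if b ≤ (i : ℕ) ∧ (i : ℕ) < b + k then (1 : R) else 0) =
      signDiagonal a (b + k) := by
  rw [signDiagonal, signDiagonal, diagonal_sub]
  congr 1
  funext i
  split_ifs <;> first | omega | simp

theorem one_add_partialShift_mul_signDiagonal_mul (hka : k ≤ a) (hab : a ≤ b) :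
    (1 + partialShift b k) * signDiagonal a b * (1 - (partialShift b k)ᵀ) =
      (signDiagonal a (b + k) : Matrix (Fin n) (Fin n) R) +
        (partialShift b k - (partialShift b k)ᵀ) := by
  set N : Matrix (Fin n) (Fin n) R := partialShift b k
  calc (1 + N) * signDiagonal a b * (1 - Nᵀ)
      = signDiagonal a b + N * signDiagonal a b - signDiagonal a b * Nᵀ
          - N * signDiagonal a b * Nᵀ := by
        noncomm_ring
    _ = signDiagonal a b - N * Nᵀ + (N - Nᵀ) := by
        rw [partialShift_mul_signDiagonal hka, signDiagonal_mul_partialShift_transpose hka]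
        abel
    _ = signDiagonal a (b + k) + (N - Nᵀ) := by
        rw [partialShift_mul_partialShift_transpose, signDiagonal_sub_diagonal_Ico hab]

theorem isUnit_one_add_partialShift (h : k ≤ b) :
    IsUnit (1 + partialShift b k : Matrix (Fin n) (Fin n) R) :=
  IsNilpotent.isUnit_one_add ⟨2, by rw [sq, partialShift_mul_self h]⟩

theorem isUnit_one_sub_partialShift_transpose (h : k ≤ b) :
    IsUnit (1 - (partialShift b k : Matrix (Fin n) (Fin n) R)ᵀ) :=
  IsNilpotent.isUnit_one_sub
    ⟨2, by rw [sq, ← transpose_mul, partialShift_mul_self h, transpose_zero]⟩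

theorem rank_signDiagonal {K : Type*} [Field K] (a b : ℕ) :
    (signDiagonal a b : Matrix (Fin n) (Fin n) K).rank = min n (max a b) := by
  classical
  rw [signDiagonal, rank_diagonal, Fintype.card_subtype, ← Fin.card_filter_val_lt]
  congr 1
  ext i
  simp only [Finset.mem_filter, Finset.mem_univ, true_and, lt_max_iff]
  split_ifs <;> simp <;> omega

end Matrix

theorem exists_min_rank_representation_general {n p q s : ℕ} (hn : p + q + s = n)
    (Q P : Matrix (Fin n) (Fin n) ℝ) (hP : IsUnit P)
    (hsig : Pᵀ * Q * P = Matrix.diagonal (fun i : Fin n =>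
      if (i : ℕ) < p then (1 : ℝ) else if (i : ℕ) < p + q then -1 else 0)) :
    ∃ Q' : Matrix (Fin n) (Fin n) ℝ, Q'.rank = max p q ∧
      ∀ x : Fin n → ℝ, x ⬝ᵥ Q'.mulVec x = x ⬝ᵥ Q.mulVec x := by
  have hPdet : IsUnit P.det := (isUnit_iff_isUnit_det P).mp hP
  have hQ : Q = (P⁻¹)ᵀ * signDiagonal p (p + q) * P⁻¹ := by
    rw [signDiagonal, ← hsig, transpose_nonsing_inv, Matrix.mul_assoc Pᵀ,
      nonsing_inv_mul_cancel_left _ _ (isUnit_det_transpose P hPdet),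
      mul_nonsing_inv_cancel_right _ _ hPdet]
  have hC : IsUnit P⁻¹ := isUnit_nonsing_inv_iff.mpr hP
  set N : Matrix (Fin n) (Fin n) ℝ := partialShift (max p q) (min p q)
  have hfactor : (1 + N) * signDiagonal p (max p q) * (1 - Nᵀ) =
      signDiagonal p (p + q) + (N - Nᵀ) := by
    rw [one_add_partialShift_mul_signDiagonal_mul (min_le_left p q) (le_max_left p q),
      max_add_min]
  refine ⟨(P⁻¹)ᵀ * ((1 + N) * signDiagonal p (max p q) * (1 - Nᵀ)) * P⁻¹, ?_, fun x => ?_⟩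
  · rw [rank_mul_mul_of_isUnit ((isUnit_transpose _).mpr hC) hC,
      rank_mul_mul_of_isUnit (isUnit_one_add_partialShift min_le_max)
        (isUnit_one_sub_partialShift_transpose min_le_max), rank_signDiagonal]
    omega
  · rw [hfactor, hQ, dotProduct_conj_add_sub_transpose_mulVec_self]

theorem exists_min_rank_representation {n p q s : ℕ} (hn : p + q + s = n)
    (Q P : Matrix (Fin n) (Fin n) ℝ) (hQ : Qᵀ = Q) (hP : IsUnit P)
    (hsig : Pᵀ * Q * P = Matrix.diagonal (fun i : Fin n =>
      if (i : ℕ) < p then (1 : ℝ) else if (i : ℕ) < p + q then -1 else 0)) :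
    ∃ Q' : Matrix (Fin n) (Fin n) ℝ, Q'.rank = max p q ∧
      ∀ x : Fin n → ℝ, x ⬝ᵥ Q'.mulVec x = x ⬝ᵥ Q.mulVec x :=
  exists_min_rank_representation_general hn Q P hP hsig
end

section
/- Let Q be a real symmetric n×n matrix whose associated quadratic form has signature (p, q, s). Then every real matrix Q' satisfying xᵀQ'x = xᵀQx for all x ∈ ℝⁿ has rank(Q') ≥ max(p, q). -/
/-! If `Pᵀ Q P = diag(1, …, 1, -1, …, -1, 0, …, 0)`, the first `p` columns of `P` span a subspace
on which the form `x ↦ xᵀ Q x = xᵀ Q' x` is positive definite, and the next `q` columns one on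
which it is negative definite. A definite subspace meets `ker Q'` trivially, since `Q' x = 0`
forces `xᵀ Q' x = 0`; so it injects into the range of `Q'`, and `p, q ≤ rank Q'`. -/

open Matrix

namespace Matrix

variable {ι m R : Type*} [Fintype ι]

theorem dotProduct_mulVec_mulVec_self [Fintype m] [CommSemiring R] (A : Matrix ι ι R)
    (M : Matrix ι m R) (z : m → R) :
    (M *ᵥ z) ⬝ᵥ (A *ᵥ (M *ᵥ z)) = z ⬝ᵥ ((Mᵀ * A * M) *ᵥ z) := by
  rw [← mulVec_mulVec, ← mulVec_mulVec, dotProduct_mulVec z Mᵀ, vecMul_transpose]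

theorem transpose_mul_mul_submatrix_id [CommSemiring R] (A P : Matrix ι ι R) (e : m → ι) :
    (P.submatrix id e)ᵀ * A * P.submatrix id e = (Pᵀ * A * P).submatrix e e := by
  rw [transpose_submatrix, submatrix_mul _ _ _ id _ Function.bijective_id,
    submatrix_mul _ _ _ id _ Function.bijective_id, submatrix_id_id]

theorem card_le_rank_of_dotProduct_mulVec_ne_zero [Fintype m] [Field R] (A : Matrix ι ι R)
    (M : Matrix ι m R) (h : ∀ z ≠ 0, (M *ᵥ z) ⬝ᵥ (A *ᵥ (M *ᵥ z)) ≠ 0) :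
    Fintype.card m ≤ A.rank := by
  have hinj : Function.Injective (A * M).mulVec := by
    refine (injective_iff_map_eq_zero (A * M).mulVecLin).mpr fun z hz => ?_
    rw [mulVecLin_apply] at hz
    by_contra hne
    apply h z hne
    rw [mulVec_mulVec, hz, dotProduct_zero]
  calc Fintype.card m = (A * M).rank := by
        rw [← rank_transpose, (mulVec_injective_iff.mp hinj).rank_matrix]
    _ ≤ A.rank := rank_mul_le_left A M

theorem card_le_rank_of_transpose_mul_mul_eq_diagonal [Fintype m] [DecidableEq ι] [DecidableEq m]
    [Field R] [LinearOrder R] [IsStrictOrderedRing R] {Q Q' P : Matrix ι ι R} {d : ι → R}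
    (hP : Pᵀ * Q * P = diagonal d) (hQQ' : ∀ x, x ⬝ᵥ Q' *ᵥ x = x ⬝ᵥ Q *ᵥ x)
    {e : m → ι} (he : Function.Injective e) {c : R} (hc : c ≠ 0) (hd : ∀ j, d (e j) = c) :
    Fintype.card m ≤ Q'.rank := by
  refine card_le_rank_of_dotProduct_mulVec_ne_zero Q' (P.submatrix id e) fun z hz => ?_
  have hde : d ∘ e = fun _ => c := funext hd
  rw [hQQ', dotProduct_mulVec_mulVec_self, transpose_mul_mul_submatrix_id, hP,
    submatrix_diagonal _ _ he, hde, ← smul_one_eq_diagonal, smul_mulVec, one_mulVec,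
    dotProduct_smul, smul_eq_mul]
  exact mul_ne_zero hc (dotProduct_self_eq_zero.not.mpr hz)

end Matrix

theorem min_rank_representation_lower_bound_general {n p q s : ℕ} (hn : p + q + s = n)
    (Q P : Matrix (Fin n) (Fin n) ℝ)
    (hsig : Pᵀ * Q * P = Matrix.diagonal (fun i : Fin n =>
      if (i : ℕ) < p then (1 : ℝ) else if (i : ℕ) < p + q then -1 else 0))
    (Q' : Matrix (Fin n) (Fin n) ℝ)
    (hQQ' : ∀ x : Fin n → ℝ, x ⬝ᵥ Q'.mulVec x = x ⬝ᵥ Q.mulVec x) :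
    max p q ≤ Q'.rank := by
  have hpq : p + q ≤ n := by omega
  have hp := card_le_rank_of_transpose_mul_mul_eq_diagonal hsig hQQ'
    ((Fin.castLE_injective hpq).comp (Fin.castAdd_injective p q)) one_ne_zero
    fun j => by simp
  have hq := card_le_rank_of_transpose_mul_mul_eq_diagonal hsig hQQ'
    ((Fin.castLE_injective hpq).comp (Fin.natAdd_injective q p)) (neg_ne_zero.mpr one_ne_zero)
    fun j => by simp
  simpa using max_le hp hq

theorem min_rank_representation_lower_bound {n p q s : ℕ} (hn : p + q + s = n)
    (Q P : Matrix (Fin n) (Fin n) ℝ) (hQ : Qᵀ = Q) (hP : IsUnit P)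
    (hsig : Pᵀ * Q * P = Matrix.diagonal (fun i : Fin n =>
      if (i : ℕ) < p then (1 : ℝ) else if (i : ℕ) < p + q then -1 else 0))
    (Q' : Matrix (Fin n) (Fin n) ℝ)
    (hQQ' : ∀ x : Fin n → ℝ, x ⬝ᵥ Q'.mulVec x = x ⬝ᵥ Q.mulVec x) :
    max p q ≤ Q'.rank :=
  min_rank_representation_lower_bound_general hn Q P hsig Q' hQQ'
end
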